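/- arXiv:2605.00189 — 5 statements merged into one kernel-verified Lean document; each statement's English description precedes it below -/
import Mathlib

section
/- For t < 0 and x ∈ ℝ, the unique real root z of x = t·z − z³ satisfies min{|x/(2t)|, |x/2|^{1/3}} ≤ |z| ≤ min{|x/t|, |x|^{1/3}}. -/
/-- For `t < 0`, the unique real root `z` of `x = t·z − z³` satisfies
`min (|x/(2t)|) (|x/2|^(1/3)) ≤ |z| ≤ min (|x/t|) (|x|^(1/3))`. -/
theorem backward_burgers_root_bounds (t x z : ℝ) (ht : t < 0)
    (hz : x = t * z - z ^ 3) :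
    min |x / (2 * t)| (|x / 2| ^ ((1 : ℝ) / 3)) ≤ |z| ∧
    |z| ≤ min |x / t| (|x| ^ ((1 : ℝ) / 3)) := by
  have ht' : (0:ℝ) < |t| := abs_pos.mpr ht.ne
  have hx : |x| = |t| * |z| + |z| ^ 3 := by
    rcases le_or_gt 0 z with h | h
    · have hx0 : x ≤ 0 := by nlinarith [mul_nonpos_of_nonpos_of_nonneg ht.le h, pow_nonneg h 3]
      rw [abs_of_nonpos hx0, abs_of_nonneg h, abs_of_neg ht, hz]; ring
    · have hx0 : 0 ≤ x := by nlinarith [mul_pos_of_neg_of_neg ht h, pow_nonneg (neg_nonneg.mpr h.le) 3]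
      rw [abs_of_nonneg hx0, abs_of_nonpos h.le, abs_of_neg ht, hz]; ring
  have hz3 : (0:ℝ) ≤ |z| ^ 3 := by positivity
  have hcube : ∀ y : ℝ, 0 ≤ y → (y ^ 3) ^ ((1:ℝ)/3) = y := by
    intro y hy
    rw [← Real.rpow_natCast y 3, ← Real.rpow_mul hy]
    norm_num
  constructor
  · rcases le_total (|z| ^ 3) (|t| * |z|) with h | h
    · refine le_trans (min_le_left _ _) ?_
      rw [abs_div, abs_mul, div_le_iff₀ (by positivity)]
      have h2 : |(2:ℝ)| = 2 := by norm_num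
      rw [h2]; nlinarith
    · refine le_trans (min_le_right _ _) ?_
      have hle : |x / 2| ≤ |z| ^ 3 := by
        rw [abs_div]
        have h2 : |(2:ℝ)| = 2 := by norm_num
        rw [h2, div_le_iff₀ (by norm_num)]; nlinarith
      calc |x / 2| ^ ((1:ℝ)/3) ≤ (|z| ^ 3) ^ ((1:ℝ)/3) :=
            Real.rpow_le_rpow (abs_nonneg _) hle (by norm_num)
        _ = |z| := hcube _ (abs_nonneg z)
  · refine le_min ?_ ?_
    · rw [abs_div, le_div_iff₀ ht']
      nlinarith
    · have hle : |z| ^ 3 ≤ |x| := by nlinarith [mul_nonneg (abs_nonneg t) (abs_nonneg z)]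
      calc |z| = (|z| ^ 3) ^ ((1:ℝ)/3) := (hcube _ (abs_nonneg z)).symm
        _ ≤ |x| ^ ((1:ℝ)/3) := Real.rpow_le_rpow (by positivity) hle (by norm_num)
end

section
/- Let t < 0 and let z(t,x) be the unique real root of x = t·z − z³. Then the second derivative satisfies z_{xx}(t,x) = 6z/(t − 3z²)³, and |z_{xx}(t,x)| < |t|^{−5/2}. Moreover z_{xx}(t,x) ≤ 0 for x ≤ 0 and z_{xx}(t,x) ≥ 0 for x ≥ 0. -/
/-!
For `t < 0` the map `z ↦ t z - z³` is strictly decreasing, so `Z` is its inverse: antitone and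
onto, hence continuous, and the inverse function theorem gives `Z' = (t - 3 Z²)⁻¹`; differentiating
once more gives `Z'' = 6 Z / (t - 3 Z²)³`. With `a = |t|` and `u = Z²`, the bound `|Z''| < a^(-5/2)`
becomes the polynomial inequality `36 u a⁵ < (3u + a)⁶`. Finally `t - 3 Z² < 0`, so `Z''` has the
sign opposite to `Z`, which in turn has the sign opposite to `x = Z (t - Z²)`.
-/

open Real

theorem StrictAnti.continuous_of_leftInverse {g Z : ℝ → ℝ} (hg : StrictAnti g)
    (hgZ : Function.LeftInverse g Z) : Continuous Z := by
  have hZ_anti : Antitone Z := fun x₁ x₂ hx ↦ by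
    by_contra! h
    have := hg h
    rw [hgZ, hgZ] at this
    linarith
  have hZ_surj : Function.Surjective Z := fun z ↦ ⟨g z, hg.injective (hgZ (g z))⟩
  have hneg : Continuous fun y ↦ -Z y :=
    hZ_anti.neg.continuous_of_surjective (neg_surjective.comp hZ_surj)
  exact hneg.neg.congr fun y ↦ neg_neg (Z y)

theorem strictAnti_mul_sub_pow_three {t : ℝ} (ht : t ≤ 0) :
    StrictAnti fun z : ℝ ↦ t * z - z ^ 3 := fun z₁ z₂ h ↦ by
  have hq : 0 < z₁ ^ 2 + z₁ * z₂ + z₂ ^ 2 - t := by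
    nlinarith [sq_nonneg (z₁ + z₂), sq_pos_of_pos (sub_pos.2 h)]
  nlinarith [mul_pos (sub_pos.2 h) hq]

-- `36 u a⁵ / (3u + a)⁶` peaks at `u = a / 15`, with value `(12/5)(5/6)⁶ < 1`.
theorem mul_pow_five_lt_add_pow_six {u a : ℝ} (hu : 0 ≤ u) (ha : 0 < a) :
    36 * u * a ^ 5 < (3 * u + a) ^ 6 := by
  nlinarith [pow_pos ha 6, pow_pos ha 4, mul_nonneg hu ha.le,
    mul_nonneg (mul_nonneg hu hu) (sq_nonneg (15 * u - a)),
    mul_nonneg (mul_nonneg ha.le ha.le) (sq_nonneg (15 * u - a)),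
    mul_nonneg (mul_nonneg hu ha.le) (sq_nonneg (15 * u - a))]

theorem abs_six_mul_div_sub_sq_pow_three_lt {t : ℝ} (ht : t < 0) (z : ℝ) :
    |6 * z / (t - 3 * z ^ 2) ^ 3| < |t| ^ (-(5 : ℝ) / 2) := by
  have hw : |t - 3 * z ^ 2| = 3 * z ^ 2 + |t| := by
    rw [abs_of_neg (by nlinarith [sq_nonneg z]), abs_of_neg ht]; ring
  set a := |t|
  have ha : 0 < a := abs_pos.2 ht.ne
  have hrpow : a ^ (-(5 : ℝ) / 2) = (√a ^ 5)⁻¹ := by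
    rw [neg_div, rpow_neg ha.le, rpow_div_two_eq_sqrt _ ha.le]; norm_cast
  have hsq : (6 * |z| * √a ^ 5) ^ 2 < ((3 * z ^ 2 + a) ^ 3) ^ 2 := by
    calc (6 * |z| * √a ^ 5) ^ 2 = 36 * z ^ 2 * a ^ 5 := by
          rw [mul_pow, mul_pow, sq_abs, ← pow_mul, mul_comm 5, pow_mul, sq_sqrt ha.le]; ring
      _ < (3 * z ^ 2 + a) ^ 6 := mul_pow_five_lt_add_pow_six (sq_nonneg z) ha
      _ = ((3 * z ^ 2 + a) ^ 3) ^ 2 := by ring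
  rw [hrpow, abs_div, abs_mul, abs_pow, hw, abs_of_pos (by norm_num : (0 : ℝ) < 6),
    div_lt_iff₀ (by positivity), inv_mul_eq_div, lt_div_iff₀ (by positivity)]
  exact lt_of_pow_lt_pow_left₀ 2 (by positivity) hsq

section CubicRoot

variable {t : ℝ} {Z : ℝ → ℝ}

theorem hasDerivAt_cubic_root (ht : t < 0) (hZ : ∀ x, x = t * Z x - Z x ^ 3) (x : ℝ) :
    HasDerivAt Z (t - 3 * Z x ^ 2)⁻¹ x := by
  have hcont : Continuous Z :=
    (strictAnti_mul_sub_pow_three ht.le).continuous_of_leftInverse fun y ↦ (hZ y).symm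
  have hcubic : HasDerivAt (fun z ↦ t * z - z ^ 3) (t - 3 * Z x ^ 2) (Z x) :=
    (((hasDerivAt_id' (Z x)).const_mul t).fun_sub (hasDerivAt_pow 3 (Z x))).congr_deriv
      (by push_cast; ring)
  exact hcubic.of_local_left_inverse hcont.continuousAt (by nlinarith [sq_nonneg (Z x)])
    (.of_forall fun y ↦ (hZ y).symm)

theorem deriv_deriv_cubic_root (ht : t < 0) (hZ : ∀ x, x = t * Z x - Z x ^ 3) (x : ℝ) :
    deriv (deriv Z) x = 6 * Z x / (t - 3 * Z x ^ 2) ^ 3 := by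
  have hw : t - 3 * Z x ^ 2 ≠ 0 := by nlinarith [sq_nonneg (Z x)]
  have hderiv : deriv Z = fun y ↦ (t - 3 * Z y ^ 2)⁻¹ :=
    funext fun y ↦ (hasDerivAt_cubic_root ht hZ y).deriv
  have hinner : HasDerivAt (fun y ↦ t - 3 * Z y ^ 2)
      (-(3 * (2 * Z x * (t - 3 * Z x ^ 2)⁻¹))) x :=
    ((((hasDerivAt_cubic_root ht hZ x).fun_pow 2).const_mul 3).const_sub t).congr_deriv
      (by push_cast; ring)
  rw [hderiv, (hinner.fun_inv hw).deriv]
  field_simp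
  ring

theorem nonneg_of_eq_mul_sub_pow_three_of_nonpos {x z : ℝ} (ht : t ≤ 0)
    (hx : x = t * z - z ^ 3) (hx0 : x ≤ 0) : 0 ≤ z := by
  by_contra! hz
  nlinarith [mul_pos (neg_pos.2 hz) (show 0 < z ^ 2 - t by nlinarith)]

theorem nonpos_of_eq_mul_sub_pow_three_of_nonneg {x z : ℝ} (ht : t ≤ 0)
    (hx : x = t * z - z ^ 3) (hx0 : 0 ≤ x) : z ≤ 0 := by
  have := nonneg_of_eq_mul_sub_pow_three_of_nonpos (x := -x) (z := -z) ht
    (by rw [hx]; ring) (by linarith)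
  linarith

end CubicRoot

/-- For `t < 0`, the second derivative of the root `z(t,·)` of `x = t·z − z³`
equals `6z/(t − 3z²)³`, is bounded in absolute value by `|t|^(−5/2)`, and is
nonpositive for `x ≤ 0`, nonnegative for `x ≥ 0`. -/
theorem backward_burgers_root_second_derivative (t : ℝ) (ht : t < 0)
    (Z : ℝ → ℝ) (hZ : ∀ x : ℝ, x = t * Z x - (Z x) ^ 3) (x : ℝ) :
    deriv (deriv Z) x = 6 * Z x / (t - 3 * (Z x) ^ 2) ^ 3 ∧
    |deriv (deriv Z) x| < |t| ^ (-(5 : ℝ) / 2) ∧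
    (x ≤ 0 → deriv (deriv Z) x ≤ 0) ∧
    (0 ≤ x → 0 ≤ deriv (deriv Z) x) := by
  have hZ'' := deriv_deriv_cubic_root ht hZ x
  have hw : (t - 3 * Z x ^ 2) ^ 3 < 0 := Odd.pow_neg (by decide) (by nlinarith [sq_nonneg (Z x)])
  refine ⟨hZ'', hZ'' ▸ abs_six_mul_div_sub_sq_pow_three_lt ht (Z x), fun hx ↦ ?_, fun hx ↦ ?_⟩
  · have hz := nonneg_of_eq_mul_sub_pow_three_of_nonpos ht.le (hZ x) hx
    rw [hZ'']
    exact div_nonpos_of_nonneg_of_nonpos (by linarith) hw.le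
  · have hz := nonpos_of_eq_mul_sub_pow_three_of_nonneg ht.le (hZ x) hx
    rw [hZ'']
    exact div_nonneg_of_nonpos (by linarith) hw.le
end

section
/- Let t < 0 and let z(t,x) be the unique real root of x = t·z − z³. Then the third derivative satisfies z_{xxx} = 6/(t−3z²)⁴ − 108 z²/((t−3z²)⁴(3z²−t)), and z_{xxx} ∈ [−36/(t−3z²)⁴, 6/(t−3z²)⁴]; in particular |z_{xxx}| ≤ 36·t^{−4}. -/
/-!
`Z` is the inverse of the strictly decreasing cubic `g z = t z - z³`, so by the inverse
function theorem `Z' = 1 / g'(Z) = (t - 3Z²)⁻¹`. Each further derivative is a function of `Z`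
alone, obtained by the chain rule as `(φ ∘ Z)' = φ'(Z) · (t - 3Z²)⁻¹`; two steps give `Z'''` as
a rational function of `Z`. The bounds come from `z² / (3z² - t) ≤ 1/3` and `|t| ≤ |t - 3z²|`.
-/

open Function

theorem StrictAnti.continuous_of_rightInverse {α β : Type*} [LinearOrder α] [TopologicalSpace α]
    [OrderTopology α] [LinearOrder β] [TopologicalSpace β] [OrderTopology β] [DenselyOrdered β]
    {g : β → α} {Z : α → β} (hg : StrictAnti g) (hZ : RightInverse Z g) : Continuous Z := by
  have hZanti : Antitone Z := fun a b hab => hg.le_iff_ge.mp (by rwa [hZ a, hZ b])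
  have hZsurj : Surjective Z := fun z => ⟨g z, hg.injective (hZ (g z))⟩
  exact hZanti.dual_left.continuous_of_surjective hZsurj

theorem hasDerivAt_deriv_of_forall_comp {𝕜 : Type*} [NontriviallyNormedField 𝕜]
    {Z G f g g' : 𝕜 → 𝕜} (hZ : ∀ y, HasDerivAt Z (f (Z y)) y)
    (hG : ∀ y, HasDerivAt G (g (Z y)) y) (hg : ∀ z, HasDerivAt g (g' z) z) (y : 𝕜) :
    HasDerivAt (deriv G) (g' (Z y) * f (Z y)) y := by
  rw [show deriv G = g ∘ Z from funext fun y => (hG y).deriv]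
  exact (hg (Z y)).comp y (hZ y)

section

variable {t : ℝ}

lemma sub_three_mul_sq_neg (ht : t < 0) (z : ℝ) : t - 3 * z ^ 2 < 0 := by
  nlinarith [sq_nonneg z]

lemma strictAnti_mul_sub_cube (ht : t ≤ 0) : StrictAnti fun z : ℝ => t * z - z ^ 3 := by
  intro a b hab
  have hpos : 0 < a ^ 2 + a * b + b ^ 2 - t := by
    nlinarith [sq_nonneg (a + b), sq_pos_of_pos (sub_pos.2 hab)]
  nlinarith [mul_pos (sub_pos.2 hab) hpos]

lemma hasDerivAt_mul_sub_cube (z : ℝ) :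
    HasDerivAt (fun z : ℝ => t * z - z ^ 3) (t - 3 * z ^ 2) z :=
  (((hasDerivAt_id z).const_mul t).sub (hasDerivAt_pow 3 z)).congr_deriv (by simp)

lemma hasDerivAt_sub_three_mul_sq (z : ℝ) :
    HasDerivAt (fun z : ℝ => t - 3 * z ^ 2) (-(6 * z)) z :=
  (((hasDerivAt_pow 2 z).const_mul 3).const_sub t).congr_deriv (by ring)

lemma hasDerivAt_inv_sub_three_mul_sq (ht : t < 0) (z : ℝ) :
    HasDerivAt (fun z : ℝ => (t - 3 * z ^ 2)⁻¹) (6 * z / (t - 3 * z ^ 2) ^ 2) z :=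
  ((hasDerivAt_sub_three_mul_sq z).inv (sub_three_mul_sq_neg ht z).ne).congr_deriv
    (by rw [neg_neg])

lemma hasDerivAt_mul_div_sub_three_mul_sq_pow_three (ht : t < 0) (z : ℝ) :
    HasDerivAt (fun z : ℝ => 6 * z / (t - 3 * z ^ 2) ^ 3)
      (6 / (t - 3 * z ^ 2) ^ 3 + 108 * z ^ 2 / (t - 3 * z ^ 2) ^ 4) z := by
  have hd := (sub_three_mul_sq_neg ht z).ne
  refine (((hasDerivAt_id z).const_mul 6).div ((hasDerivAt_sub_three_mul_sq z).pow 3)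
    (pow_ne_zero 3 hd)).congr_deriv ?_
  simp only [id, Pi.pow_apply, Nat.cast_ofNat]
  field_simp
  ring

lemma sq_div_three_mul_sq_sub_le (ht : t ≤ 0) (z : ℝ) : z ^ 2 / (3 * z ^ 2 - t) ≤ 1 / 3 :=
  div_le_of_le_mul₀ (by nlinarith [sq_nonneg z]) (by norm_num) (by linarith)

lemma pow_four_le_sub_three_mul_sq_pow_four (ht : t ≤ 0) (z : ℝ) :
    t ^ 4 ≤ (t - 3 * z ^ 2) ^ 4 := by
  have hle : -t ≤ -(t - 3 * z ^ 2) := by nlinarith [sq_nonneg z]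
  have := pow_le_pow_left₀ (neg_nonneg.2 ht) hle 4
  rwa [Even.neg_pow (by decide), Even.neg_pow (by decide)] at this

lemma third_deriv_eq (ht : t < 0) (z : ℝ) :
    (6 / (t - 3 * z ^ 2) ^ 3 + 108 * z ^ 2 / (t - 3 * z ^ 2) ^ 4) * (t - 3 * z ^ 2)⁻¹
      = 6 / (t - 3 * z ^ 2) ^ 4 - 108 * z ^ 2 / ((t - 3 * z ^ 2) ^ 4 * (3 * z ^ 2 - t)) := by
  have hd := (sub_three_mul_sq_neg ht z).ne
  have hd' : 3 * z ^ 2 - t ≠ 0 := by linarith [sub_three_mul_sq_neg ht z]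
  field_simp
  ring

lemma third_deriv_mem_Icc (ht : t ≤ 0) (z : ℝ) :
    6 / (t - 3 * z ^ 2) ^ 4 - 108 * z ^ 2 / ((t - 3 * z ^ 2) ^ 4 * (3 * z ^ 2 - t)) ∈
      Set.Icc (-36 / (t - 3 * z ^ 2) ^ 4) (6 / (t - 3 * z ^ 2) ^ 4) := by
  have hd4 : 0 ≤ (t - 3 * z ^ 2) ^ 4 := by positivity
  have hrw : 108 * z ^ 2 / ((t - 3 * z ^ 2) ^ 4 * (3 * z ^ 2 - t))
      = 108 * (z ^ 2 / (3 * z ^ 2 - t)) / (t - 3 * z ^ 2) ^ 4 := by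
    rw [mul_comm ((t - 3 * z ^ 2) ^ 4), ← div_div, mul_div_assoc]
  have hratio : 0 ≤ z ^ 2 / (3 * z ^ 2 - t) :=
    div_nonneg (sq_nonneg z) (by nlinarith [sq_nonneg z])
  have hupper : 108 * (z ^ 2 / (3 * z ^ 2 - t)) / (t - 3 * z ^ 2) ^ 4
      ≤ 36 / (t - 3 * z ^ 2) ^ 4 := by
    gcongr
    linarith [sq_div_three_mul_sq_sub_le ht z]
  rw [hrw]
  constructor
  · rw [neg_div]
    linarith [div_nonneg (by norm_num : (0 : ℝ) ≤ 6) hd4]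
  · linarith [div_nonneg (mul_nonneg (by norm_num : (0 : ℝ) ≤ 108) hratio) hd4]

lemma abs_third_deriv_le (ht : t < 0) (z : ℝ) :
    |6 / (t - 3 * z ^ 2) ^ 4 - 108 * z ^ 2 / ((t - 3 * z ^ 2) ^ 4 * (3 * z ^ 2 - t))|
      ≤ 36 / t ^ 4 := by
  obtain ⟨hlower, hupper⟩ := third_deriv_mem_Icc ht.le z
  have hmono : 36 / (t - 3 * z ^ 2) ^ 4 ≤ 36 / t ^ 4 :=
    div_le_div_of_nonneg_left (by norm_num) (Even.pow_pos (by decide) ht.ne)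
      (pow_four_le_sub_three_mul_sq_pow_four ht.le z)
  have hsix : 6 / (t - 3 * z ^ 2) ^ 4 ≤ 36 / (t - 3 * z ^ 2) ^ 4 := by
    gcongr
    norm_num
  rw [neg_div] at hlower
  exact abs_le.2 ⟨by linarith, by linarith⟩

end

/-- For `t < 0`, the third derivative of the root `z(t,·)` of `x = t·z − z³`
equals `6/(t−3z²)⁴ − 108 z²/((t−3z²)⁴(3z²−t))`, lies in
`[−36/(t−3z²)⁴, 6/(t−3z²)⁴]`, and in particular `|z_xxx| ≤ 36·t⁻⁴`. -/
theorem backward_burgers_root_third_derivative (t : ℝ) (ht : t < 0)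
    (Z : ℝ → ℝ) (hZ : ∀ x : ℝ, x = t * Z x - (Z x) ^ 3) (x : ℝ) :
    deriv (deriv (deriv Z)) x
      = 6 / (t - 3 * (Z x) ^ 2) ^ 4
        - 108 * (Z x) ^ 2 / ((t - 3 * (Z x) ^ 2) ^ 4 * (3 * (Z x) ^ 2 - t)) ∧
    deriv (deriv (deriv Z)) x ∈
      Set.Icc (-36 / (t - 3 * (Z x) ^ 2) ^ 4) (6 / (t - 3 * (Z x) ^ 2) ^ 4) ∧
    |deriv (deriv (deriv Z)) x| ≤ 36 / t ^ 4 := by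
  have hinv : RightInverse Z fun z => t * z - z ^ 3 := fun y => (hZ y).symm
  have hZ' : ∀ y, HasDerivAt Z (t - 3 * Z y ^ 2)⁻¹ y := fun y =>
    (hasDerivAt_mul_sub_cube (Z y)).of_local_left_inverse
      ((strictAnti_mul_sub_cube ht.le).continuous_of_rightInverse hinv).continuousAt
      (sub_three_mul_sq_neg ht _).ne (.of_forall hinv)
  have hZ'' : ∀ y, HasDerivAt (deriv Z) (6 * Z y / (t - 3 * Z y ^ 2) ^ 3) y := fun y =>
    (hasDerivAt_deriv_of_forall_comp (f := fun z => (t - 3 * z ^ 2)⁻¹) hZ' hZ'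
      (hasDerivAt_inv_sub_three_mul_sq ht) y).congr_deriv (by field_simp)
  have hZ''' := hasDerivAt_deriv_of_forall_comp (f := fun z => (t - 3 * z ^ 2)⁻¹)
    (g := fun z => 6 * z / (t - 3 * z ^ 2) ^ 3) hZ' hZ''
    (hasDerivAt_mul_div_sub_three_mul_sq_pow_three ht) x
  rw [hZ'''.deriv, third_deriv_eq ht]
  exact ⟨rfl, third_deriv_mem_Icc ht.le (Z x), abs_third_deriv_le ht (Z x)⟩
end

section
/- Let f be smooth and let u(t,x) be a C² solution of u_t + f(u)_x = u_{xx} on a region where u_x ≠ 0, so that w := f(u) − u_x may be regarded as a function w(τ,u) of τ = t and u. Then w satisfies w_τ = (w − f(u))²·w_{uu}. -/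
open Function

section FluxHelpers
variable {F : ℝ → ℝ → ℝ}

private lemma flux_hd2 (hF : ContDiff ℝ (⊤ : ℕ∞) (uncurry F)) (t x : ℝ) :
    HasDerivAt (fun y => F t y) (fderiv ℝ (uncurry F) (t, x) (0, 1)) x := by
  have h1 : HasFDerivAt (uncurry F) (fderiv ℝ (uncurry F) (t, x)) (t, x) :=
    (hF.differentiable (by simp) (t, x)).hasFDerivAt
  have h2 : HasDerivAt (fun y => ((t, y) : ℝ × ℝ)) (0, 1) x :=
    HasDerivAt.prodMk (hasDerivAt_const x t) (hasDerivAt_id x)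
  exact h1.comp_hasDerivAt x h2

private lemma flux_hd1 (hF : ContDiff ℝ (⊤ : ℕ∞) (uncurry F)) (t x : ℝ) :
    HasDerivAt (fun s => F s x) (fderiv ℝ (uncurry F) (t, x) (1, 0)) t := by
  have h1 : HasFDerivAt (uncurry F) (fderiv ℝ (uncurry F) (t, x)) (t, x) :=
    (hF.differentiable (by simp) (t, x)).hasFDerivAt
  have h2 : HasDerivAt (fun s => ((s, x) : ℝ × ℝ)) (1, 0) t :=
    HasDerivAt.prodMk (hasDerivAt_id t) (hasDerivAt_const t x)
  exact h1.comp_hasDerivAt t h2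

private lemma flux_hd2' (hF : ContDiff ℝ (⊤ : ℕ∞) (uncurry F)) (t x : ℝ) :
    HasDerivAt (fun y => F t y) (deriv (fun y => F t y) x) x :=
  (flux_hd2 hF t x).differentiableAt.hasDerivAt

private lemma flux_hd1' (hF : ContDiff ℝ (⊤ : ℕ∞) (uncurry F)) (t x : ℝ) :
    HasDerivAt (fun s => F s x) (deriv (fun s => F s x) t) t :=
  (flux_hd1 hF t x).differentiableAt.hasDerivAt

private lemma flux_p2_eq (hF : ContDiff ℝ (⊤ : ℕ∞) (uncurry F)) (t x : ℝ) :
    deriv (fun y => F t y) x = fderiv ℝ (uncurry F) (t, x) (0, 1) :=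
  (flux_hd2 hF t x).deriv

private lemma flux_p1_eq (hF : ContDiff ℝ (⊤ : ℕ∞) (uncurry F)) (t x : ℝ) :
    deriv (fun s => F s x) t = fderiv ℝ (uncurry F) (t, x) (1, 0) :=
  (flux_hd1 hF t x).deriv

private lemma flux_contDiff_p2 (hF : ContDiff ℝ (⊤ : ℕ∞) (uncurry F)) :
    ContDiff ℝ (⊤ : ℕ∞) (uncurry (fun t x => deriv (fun y => F t y) x)) := by
  have h : (uncurry (fun t x => deriv (fun y => F t y) x)) =
      fun p : ℝ × ℝ => fderiv ℝ (uncurry F) p (0, 1) := by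
    funext p; exact flux_p2_eq hF p.1 p.2
  rw [h]
  exact (hF.fderiv_right (by simp)).clm_apply contDiff_const

private lemma flux_contDiff_p1 (hF : ContDiff ℝ (⊤ : ℕ∞) (uncurry F)) :
    ContDiff ℝ (⊤ : ℕ∞) (uncurry (fun t x => deriv (fun s => F s x) t)) := by
  have h : (uncurry (fun t x => deriv (fun s => F s x) t)) =
      fun p : ℝ × ℝ => fderiv ℝ (uncurry F) p (1, 0) := by
    funext p; exact flux_p1_eq hF p.1 p.2
  rw [h]
  exact (hF.fderiv_right (by simp)).clm_apply contDiff_const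

private lemma flux_clairaut (hF : ContDiff ℝ (⊤ : ℕ∞) (uncurry F)) (t x : ℝ) :
    deriv (fun s => deriv (fun y => F s y) x) t =
      deriv (fun y => deriv (fun s => F s y) t) x := by
  have hF' : ContDiff ℝ (⊤ : ℕ∞) (fderiv ℝ (uncurry F)) := hF.fderiv_right (by simp)
  have hsymm := second_derivative_symmetric
    (f := uncurry F) (f' := fderiv ℝ (uncurry F))
    (f'' := fderiv ℝ (fderiv ℝ (uncurry F)) (t, x)) (x := (t, x))
    (fun y => (hF.differentiable (by simp) y).hasFDerivAt)
    ((hF'.differentiable (by simp) (t, x)).hasFDerivAt)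
  have e1 : (fun s => deriv (fun y => F s y) x) =
      fun s => fderiv ℝ (uncurry F) (s, x) (0, 1) := by
    funext s; exact flux_p2_eq hF s x
  have e2 : (fun y => deriv (fun s => F s y) t) =
      fun y => fderiv ℝ (uncurry F) (t, y) (1, 0) := by
    funext y; exact flux_p1_eq hF t y
  rw [e1, e2]
  have h1 : HasFDerivAt (fderiv ℝ (uncurry F))
      (fderiv ℝ (fderiv ℝ (uncurry F)) (t, x)) (t, x) :=
    (hF'.differentiable (by simp) (t, x)).hasFDerivAt
  have c1 : HasDerivAt (fun s => fderiv ℝ (uncurry F) (s, x) (0, 1))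
      (fderiv ℝ (fderiv ℝ (uncurry F)) (t, x) (1, 0) (0, 1)) t := by
    have h2 : HasDerivAt (fun s => ((s, x) : ℝ × ℝ)) (1, 0) t :=
      HasDerivAt.prodMk (hasDerivAt_id t) (hasDerivAt_const t x)
    have h3 := h1.comp_hasDerivAt t h2
    have h4 := h3.clm_apply (hasDerivAt_const t ((0:ℝ), (1:ℝ)))
    exact h4.congr_deriv (by simp)
  have c2 : HasDerivAt (fun y => fderiv ℝ (uncurry F) (t, y) (1, 0))
      (fderiv ℝ (fderiv ℝ (uncurry F)) (t, x) (0, 1) (1, 0)) x := by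
    have h2 : HasDerivAt (fun y => ((t, y) : ℝ × ℝ)) (0, 1) x :=
      HasDerivAt.prodMk (hasDerivAt_const x t) (hasDerivAt_id x)
    have h3 := h1.comp_hasDerivAt x h2
    have h4 := h3.clm_apply (hasDerivAt_const x ((1:ℝ), (0:ℝ)))
    exact h4.congr_deriv (by simp)
  rw [c1.deriv, c2.deriv, hsymm]

/-- Chain rule along the curve `s ↦ (s, γ s)`. -/
private lemma flux_curve (hF : ContDiff ℝ (⊤ : ℕ∞) (uncurry F)) {γ : ℝ → ℝ} {c t : ℝ}
    (hγ : HasDerivAt γ c t) :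
    HasDerivAt (fun s => F s (γ s))
      (deriv (fun s => F s (γ t)) t + deriv (fun y => F t y) (γ t) * c) t := by
  have h1 : HasFDerivAt (uncurry F) (fderiv ℝ (uncurry F) (t, γ t)) (t, γ t) :=
    (hF.differentiable (by simp) (t, γ t)).hasFDerivAt
  have h2 : HasDerivAt (fun s => ((s, γ s) : ℝ × ℝ)) (1, c) t :=
    HasDerivAt.prodMk (hasDerivAt_id t) hγ
  have h3 := h1.comp_hasDerivAt t h2
  refine HasDerivAt.congr_deriv h3 ?_
  symm
  rw [flux_p1_eq hF, flux_p2_eq hF]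
  have e : ((1 : ℝ), c) = (1, 0) + c • ((0 : ℝ), (1 : ℝ)) := by simp
  rw [e, map_add, map_smul]
  simp [mul_comm]

end FluxHelpers

/-- Flux-variable transformation: if `u` is a smooth solution of
`u_t + f(u)_x = u_xx` with `u_x ≠ 0`, and `w = f(u) − u_x` is regarded as a
function `W(τ,u)` of `τ = t` and `u = u(t,x)`, then `W_τ = (W − f(u))² W_uu`. -/
theorem flux_variable_transformation (f : ℝ → ℝ) (hf : ContDiff ℝ (⊤ : ℕ∞) f)
    (u : ℝ → ℝ → ℝ) (hu : ContDiff ℝ (⊤ : ℕ∞) (Function.uncurry u))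
    (hux : ∀ t x : ℝ, deriv (fun y => u t y) x ≠ 0)
    (hpde : ∀ t x : ℝ,
      deriv (fun s => u s x) t + deriv (fun y => f (u t y)) x
        = deriv (deriv (fun y => u t y)) x)
    (W : ℝ → ℝ → ℝ) (hW : ContDiff ℝ (⊤ : ℕ∞) (Function.uncurry W))
    (hWdef : ∀ t x : ℝ, W t (u t x) = f (u t x) - deriv (fun y => u t y) x) :
    ∀ t x : ℝ,
      deriv (fun s => W s (u t x)) t
        = (W t (u t x) - f (u t x)) ^ 2 * deriv (deriv (fun z => W t z)) (u t x) := by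
  -- notation for partial derivatives
  set ux : ℝ → ℝ → ℝ := fun t x => deriv (fun y => u t y) x with hux_def
  set ut : ℝ → ℝ → ℝ := fun t x => deriv (fun s => u s x) t with hut_def
  set uxx : ℝ → ℝ → ℝ := fun t x => deriv (fun y => ux t y) x with huxx_def
  set uxxx : ℝ → ℝ → ℝ := fun t x => deriv (fun y => uxx t y) x with huxxx_def
  set Wu : ℝ → ℝ → ℝ := fun t z => deriv (fun y => W t y) z with hWu_def
  set Wuu : ℝ → ℝ → ℝ := fun t z => deriv (fun y => Wu t y) z with hWuu_def
  have hux_cd : ContDiff ℝ (⊤ : ℕ∞) (uncurry ux) := flux_contDiff_p2 hu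
  have hut_cd : ContDiff ℝ (⊤ : ℕ∞) (uncurry ut) := flux_contDiff_p1 hu
  have huxx_cd : ContDiff ℝ (⊤ : ℕ∞) (uncurry uxx) := flux_contDiff_p2 hux_cd
  have hWu_cd : ContDiff ℝ (⊤ : ℕ∞) (uncurry Wu) := flux_contDiff_p2 hW
  have hf' : ContDiff ℝ (⊤ : ℕ∞) (deriv f) := by
    have h : deriv f = fun x => fderiv ℝ f x 1 := by
      funext x; rw [fderiv_apply_one_eq_deriv]
    rw [h]
    exact (hf.fderiv_right (by simp)).clm_apply contDiff_const
  intro t x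
  -- Equation (A):  Wu(t,u)·ux = f'(u)·ux − uxx
  have hA : ∀ t x : ℝ, Wu t (u t x) * ux t x = deriv f (u t x) * ux t x - uxx t x := by
    intro t x
    have h1 : HasDerivAt (fun x' => W t (u t x')) (Wu t (u t x) * ux t x) x :=
      (flux_hd2' hW t (u t x)).comp x (flux_hd2' hu t x)
    have h2 : HasDerivAt (fun x' => f (u t x') - ux t x')
        (deriv f (u t x) * ux t x - uxx t x) x :=
      (((hf.differentiable (by simp) (u t x)).hasDerivAt.comp x (flux_hd2' hu t x))).sub
        (flux_hd2' hux_cd t x)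
    have he : (fun x' => W t (u t x')) = fun x' => f (u t x') - ux t x' :=
      funext fun x' => hWdef t x'
    rw [he] at h1
    exact h1.unique h2
  -- Equation (B):  Wuu·ux² + Wu·uxx = f''·ux² + f'·uxx − uxxx
  have hB : Wuu t (u t x) * ux t x * ux t x + Wu t (u t x) * uxx t x
      = deriv (deriv f) (u t x) * ux t x * ux t x + deriv f (u t x) * uxx t x
        - uxxx t x := by
    have h1 : HasDerivAt (fun x' => Wu t (u t x') * ux t x')
        (Wuu t (u t x) * ux t x * ux t x + Wu t (u t x) * uxx t x) x :=
      ((flux_hd2' hWu_cd t (u t x)).comp x (flux_hd2' hu t x)).mul (flux_hd2' hux_cd t x)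
    have h2 : HasDerivAt (fun x' => deriv f (u t x') * ux t x' - uxx t x')
        (deriv (deriv f) (u t x) * ux t x * ux t x + deriv f (u t x) * uxx t x
          - uxxx t x) x :=
      (((hf'.differentiable (by simp) (u t x)).hasDerivAt.comp x (flux_hd2' hu t x)).mul
        (flux_hd2' hux_cd t x)).sub (flux_hd2' huxx_cd t x)
    have he : (fun x' => Wu t (u t x') * ux t x')
        = fun x' => deriv f (u t x') * ux t x' - uxx t x' := funext fun x' => hA t x'
    rw [he] at h1
    exact h1.unique h2
  -- Equation (C):  W_t + Wu·ut = f'·ut − ∂t(ux)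
  have hC : deriv (fun s => W s (u t x)) t + Wu t (u t x) * ut t x
      = deriv f (u t x) * ut t x - deriv (fun s => ux s x) t := by
    have h1 : HasDerivAt (fun s => W s (u s x))
        (deriv (fun s => W s (u t x)) t + Wu t (u t x) * ut t x) t :=
      flux_curve hW (flux_hd1' hu t x)
    have h2 : HasDerivAt (fun s => f (u s x) - ux s x)
        (deriv f (u t x) * ut t x - deriv (fun s => ux s x) t) t :=
      (((hf.differentiable (by simp) (u t x)).hasDerivAt.comp t (flux_hd1' hu t x))).sub
        (flux_hd1' hux_cd t x)
    have he : (fun s => W s (u s x)) = fun s => f (u s x) - ux s x :=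
      funext fun s => hWdef s x
    rw [he] at h1
    exact h1.unique h2
  -- Clairaut:  ∂t(ux) = ∂x(ut)
  have hD : deriv (fun s => ux s x) t = deriv (fun y => ut t y) x := flux_clairaut hu t x
  -- PDE rewritten:  ut = uxx − f'(u)·ux
  have hE : ∀ t x : ℝ, ut t x = uxx t x - deriv f (u t x) * ux t x := by
    intro t x
    have hcomp : deriv (fun y => f (u t y)) x = deriv f (u t x) * ux t x :=
      ((hf.differentiable (by simp) (u t x)).hasDerivAt.comp x (flux_hd2' hu t x)).deriv
    have := hpde t x
    rw [hcomp] at this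
    have hxx : deriv (deriv (fun y => u t y)) x = uxx t x := rfl
    rw [hxx] at this
    linarith
  -- Equation (F):  ∂x(ut) = uxxx − f''·ux² − f'·uxx
  have hF : deriv (fun y => ut t y) x
      = uxxx t x - (deriv (deriv f) (u t x) * ux t x * ux t x
        + deriv f (u t x) * uxx t x) := by
    have h1 : HasDerivAt (fun y => ut t y) (deriv (fun y => ut t y) x) x :=
      flux_hd2' hut_cd t x
    have h2 : HasDerivAt (fun y => uxx t y - deriv f (u t y) * ux t y)
        (uxxx t x - (deriv (deriv f) (u t x) * ux t x * ux t x
          + deriv f (u t x) * uxx t x)) x :=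
      (flux_hd2' huxx_cd t x).sub
        (((hf'.differentiable (by simp) (u t x)).hasDerivAt.comp x (flux_hd2' hu t x)).mul
          (flux_hd2' hux_cd t x))
    have he : (fun y => ut t y) = fun y => uxx t y - deriv f (u t y) * ux t y :=
      funext fun y => hE t y
    rw [he]
    exact h2.deriv
  -- assemble
  have hX : ux t x ≠ 0 := hux t x
  have hWuugoal : deriv (deriv (fun z => W t z)) (u t x) = Wuu t (u t x) := rfl
  rw [hWuugoal, hWdef t x]
  have hsq : (f (u t x) - ux t x - f (u t x)) ^ 2 = ux t x ^ 2 := by ring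
  rw [hsq]
  have hAx := hA t x
  have hTx := hE t x
  rw [hD] at hC
  have key : ux t x * deriv (fun s => W s (u t x)) t
      = ux t x * (ux t x ^ 2 * Wuu t (u t x)) := by
    linear_combination (ux t x) * hC - (ux t x) * hB - (ux t x) * hF
      + (uxx t x - ut t x) * hAx + (uxx t x) * hTx
  exact mul_left_cancel₀ hX key
end

section
/- Let z(t,x) be the unique real root of x = t·z − z³ (t < 0), and set σ(t) = (4/3)|t|^{−1/2}. Define Z̃(t,x) := z(t, x − σ(t)) + (2/3)|t|^{−3/2} for x ≥ 0 and t < 0. Then Z̃ is a supersolution of the viscous Burgers equation on {t < 0, x ≥ 0}: Z̃_t + Z̃ Z̃_x − Z̃_{xx} ≥ 0, and Z̃(t,0) ≥ 0 = z(t,0). -/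
/-!
The root is self-similar, `z(s, y) = √|s| · z(-1, y / √|s|³)`, and `z(-1, ·)` is the inverse of
the diffeomorphism `w ↦ -w - w³`; so `z` is differentiable on `{t < 0}` and its derivatives come
from differentiating the cubic implicitly: `z_x = (t - 3z²)⁻¹`, `z_t = -z z_x`,
`z_xx = 6 z z_x³`. Since `σ'(t) = (2/3)|t|^{-3/2}` is exactly the constant added to the shifted
root, all first-order terms cancel and `Z̃_t + Z̃ Z̃_x - Z̃_xx = |t|^{-5/2} - z_xx`. Writing
`t = -q²`, the bound `z_xx ≤ q⁻⁵` is `(q² + 3w²)³ + 6wq⁵ = q⁴(q + 3w)² + 27q²w⁴ + 27w⁶ ≥ 0`.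
-/

/-- The shift `σ(t) = (4/3)|t|^{−1/2}`. -/
noncomputable def sigmaShift (t : ℝ) : ℝ := (4 / 3) * |t| ^ (-(1 : ℝ) / 2)

open Filter Topology

def IsCubicRoot (z : ℝ → ℝ → ℝ) : Prop :=
  ∀ t : ℝ, t < 0 → ∀ x : ℝ, x = t * z t x - z t x ^ 3

lemma strictAnti_cubic {t : ℝ} (ht : t < 0) : StrictAnti fun w : ℝ => t * w - w ^ 3 := by
  intro a b hab
  nlinarith [mul_pos (sub_pos.2 hab) (sub_pos.2 hab), sq_nonneg (a + b), sq_nonneg a, sq_nonneg b]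

lemma cubic_deriv_neg {t : ℝ} (ht : t < 0) (w : ℝ) : t - 3 * w ^ 2 < 0 := by
  nlinarith [sq_nonneg w]

namespace IsCubicRoot

variable {z : ℝ → ℝ → ℝ} {t : ℝ}

lemma eq_of_cubic (hz : IsCubicRoot z) (ht : t < 0) {x w : ℝ} (h : x = t * w - w ^ 3) :
    z t x = w :=
  (strictAnti_cubic ht).injective ((hz t ht x).symm.trans h)

lemma apply_zero (hz : IsCubicRoot z) (ht : t < 0) : z t 0 = 0 :=
  hz.eq_of_cubic ht (by ring)

lemma nonneg_of_nonpos (hz : IsCubicRoot z) (ht : t < 0) {x : ℝ} (hx : x ≤ 0) : 0 ≤ z t x := by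
  by_contra! hneg
  have hcubic := hz t ht x
  nlinarith [mul_pos (neg_pos.2 ht) (neg_pos.2 hneg), pow_pos (neg_pos.2 hneg) 3]

lemma strictAnti (hz : IsCubicRoot z) (ht : t < 0) : StrictAnti (z t) := by
  intro a b hab
  apply (strictAnti_cubic ht).lt_iff_gt.mp
  show t * z t a - z t a ^ 3 < t * z t b - z t b ^ 3
  rwa [← hz t ht a, ← hz t ht b]

lemma continuous (hz : IsCubicRoot z) (ht : t < 0) : Continuous (z t) := by
  have hsurj : Function.Surjective fun y => -z t y := fun w =>
    ⟨t * -w - (-w) ^ 3, by simp only [hz.eq_of_cubic ht rfl, neg_neg]⟩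
  have hmono : Monotone fun y => -z t y := fun a b hab =>
    neg_le_neg ((hz.strictAnti ht).antitone hab)
  exact continuous_neg_iff.1 (hmono.continuous_of_surjective hsurj)

lemma hasDerivAt_right (hz : IsCubicRoot z) (ht : t < 0) (x : ℝ) :
    HasDerivAt (z t) (t - 3 * z t x ^ 2)⁻¹ x := by
  have hcubic : HasDerivAt (fun w => t * w - w ^ 3) (t - 3 * z t x ^ 2) (z t x) := by
    refine (((hasDerivAt_id _).const_mul t).sub (hasDerivAt_pow 3 _)).congr_deriv ?_
    norm_num
  exact hcubic.of_local_left_inverse (hz.continuous ht).continuousAt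
    (cubic_deriv_neg ht _).ne (Eventually.of_forall fun y => (hz t ht y).symm)

lemma hasDerivAt_deriv_right (hz : IsCubicRoot z) (ht : t < 0) (x : ℝ) :
    HasDerivAt (deriv (z t)) (6 * z t x * ((t - 3 * z t x ^ 2)⁻¹) ^ 3) x := by
  rw [funext fun y => (hz.hasDerivAt_right ht y).deriv]
  have hne := (cubic_deriv_neg ht (z t x)).ne
  refine ((((hz.hasDerivAt_right ht x).pow 2).const_mul 3).const_sub t |>.inv hne).congr_deriv ?_
  simp only [Pi.pow_apply]
  field_simp
  ring

lemma eq_sqrt_mul_root_neg_one (hz : IsCubicRoot z) {s : ℝ} (hs : s < 0) (y : ℝ) :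
    z s y = √(-s) * z (-1) (y / √(-s) ^ 3) := by
  apply hz.eq_of_cubic hs
  set r := √(-s)
  set a := z (-1) (y / r ^ 3)
  have hr : 0 < r := Real.sqrt_pos.2 (neg_pos.2 hs)
  have hr2 : r ^ 2 = -s := Real.sq_sqrt (neg_pos.2 hs).le
  calc y = r ^ 3 * (y / r ^ 3) := by field_simp
    _ = r ^ 3 * (-1 * a - a ^ 3) := by rw [← hz (-1) (by norm_num)]
    _ = s * (r * a) - (r * a) ^ 3 := by linear_combination (-(r * a)) * hr2

lemma differentiableAt_comp (hz : IsCubicRoot z) (ht : t < 0) {ξ : ℝ → ℝ}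
    (hξ : DifferentiableAt ℝ ξ t) : DifferentiableAt ℝ (fun s => z s (ξ s)) t := by
  have hself : (fun s => z s (ξ s)) =ᶠ[𝓝 t] fun s => √(-s) * z (-1) (ξ s / √(-s) ^ 3) := by
    filter_upwards [Iio_mem_nhds ht] with s hs
    exact hz.eq_sqrt_mul_root_neg_one hs _
  have hsqrt : DifferentiableAt ℝ (fun s => √(-s)) t :=
    differentiableAt_id.neg.sqrt (neg_ne_zero.2 ht.ne)
  have hroot : Differentiable ℝ (z (-1)) := fun y =>
    (hz.hasDerivAt_right (by norm_num) y).differentiableAt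
  refine DifferentiableAt.congr_of_eventuallyEq ?_ hself
  exact hsqrt.mul ((hroot _).comp t (hξ.div (hsqrt.pow 3)
    (pow_ne_zero 3 (Real.sqrt_pos.2 (neg_pos.2 ht)).ne')))

/-- Implicit differentiation of `ξ(s) = s w(s) - w(s)³` for `w(s) = z(s, ξ(s))`. -/
lemma hasDerivAt_comp (hz : IsCubicRoot z) (ht : t < 0) {ξ : ℝ → ℝ} {ξ' : ℝ}
    (hξ : HasDerivAt ξ ξ' t) :
    HasDerivAt (fun s => z s (ξ s)) ((ξ' - z t (ξ t)) * (t - 3 * z t (ξ t) ^ 2)⁻¹) t := by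
  have hw := (hz.differentiableAt_comp ht hξ.differentiableAt).hasDerivAt
  set w' := deriv (fun s => z s (ξ s)) t
  have hcubic : HasDerivAt (fun s => s * z s (ξ s) - z s (ξ s) ^ 3)
      (z t (ξ t) + (t - 3 * z t (ξ t) ^ 2) * w') t := by
    refine (((hasDerivAt_id t).mul hw).sub (hw.pow 3)).congr_deriv ?_
    simp only [id]
    ring
  have hξ_eq : ξ =ᶠ[𝓝 t] fun s => s * z s (ξ s) - z s (ξ s) ^ 3 := by
    filter_upwards [Iio_mem_nhds ht] with s hs
    exact hz s hs (ξ s)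
  have hderiv := (hξ.congr_of_eventuallyEq hξ_eq.symm).unique hcubic
  refine hw.congr_deriv ?_
  rw [hderiv, add_sub_cancel_left, mul_comm, inv_mul_cancel_left₀ (cubic_deriv_neg ht _).ne]

end IsCubicRoot

lemma six_mul_mul_inv_pow_three_le {t : ℝ} (ht : t < 0) (w : ℝ) :
    6 * w * ((t - 3 * w ^ 2)⁻¹) ^ 3 ≤ |t| ^ (-(5 : ℝ) / 2) := by
  obtain ⟨q, hq, hq2⟩ : ∃ q : ℝ, 0 < q ∧ q ^ 2 = |t| :=
    ⟨√|t|, Real.sqrt_pos.2 (abs_pos.2 ht.ne), Real.sq_sqrt (abs_nonneg t)⟩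
  have hpow : |t| ^ (-(5 : ℝ) / 2) = 1 / q ^ 5 := by
    rw [← hq2, ← Real.rpow_natCast, ← Real.rpow_mul hq.le, ← Real.rpow_natCast, one_div,
      ← Real.rpow_neg hq.le]
    norm_num
  have ht_eq : t - 3 * w ^ 2 = -(q ^ 2 + 3 * w ^ 2) := by
    rw [hq2, abs_of_neg ht]
    ring
  have hkey : -(6 * w * q ^ 5) ≤ (q ^ 2 + 3 * w ^ 2) ^ 3 := by
    nlinarith [mul_nonneg (pow_nonneg hq.le 4) (sq_nonneg (q + 3 * w)),
      mul_nonneg (sq_nonneg q) (pow_nonneg (sq_nonneg w) 2), pow_nonneg (sq_nonneg w) 3]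
  rw [hpow, ht_eq]
  calc 6 * w * ((-(q ^ 2 + 3 * w ^ 2))⁻¹) ^ 3
      = -(6 * w * q ^ 5) / (q ^ 2 + 3 * w ^ 2) ^ 3 / q ^ 5 := by field_simp
    _ ≤ 1 / q ^ 5 := by gcongr; exact (div_le_one (by positivity)).2 hkey

lemma hasDerivAt_abs_rpow_of_neg {t : ℝ} (ht : t < 0) (r : ℝ) :
    HasDerivAt (fun s => |s| ^ r) (-(r * |t| ^ (r - 1))) t := by
  have habs : (fun s : ℝ => |s| ^ r) =ᶠ[𝓝 t] fun s => (-s) ^ r := by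
    filter_upwards [Iio_mem_nhds ht] with s hs
    rw [abs_of_neg hs]
  refine HasDerivAt.congr_of_eventuallyEq ?_ habs
  rw [abs_of_neg ht]
  refine ((hasDerivAt_id t).neg.rpow_const (p := r) (Or.inl (neg_ne_zero.2 ht.ne))).congr_deriv ?_
  simp

lemma hasDerivAt_sigmaShift {t : ℝ} (ht : t < 0) :
    HasDerivAt sigmaShift (2 / 3 * |t| ^ (-(3 : ℝ) / 2)) t := by
  refine ((hasDerivAt_abs_rpow_of_neg ht (-(1 : ℝ) / 2)).const_mul (4 / 3)).congr_deriv ?_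
  rw [show -(1 : ℝ) / 2 - 1 = -(3 : ℝ) / 2 by norm_num]
  ring

/-- The comparison function `Z̃(t,x) = z(t, x − σ(t)) + (2/3)|t|^{−3/2}` is a
supersolution of the viscous Burgers equation on `{t < 0, x ≥ 0}`, with
`Z̃(t,0) ≥ 0 = z(t,0)`. -/
theorem shifted_root_supersolution (z : ℝ → ℝ → ℝ)
    (hz : ∀ t : ℝ, t < 0 → ∀ x : ℝ, x = t * z t x - (z t x) ^ 3)
    (W : ℝ → ℝ → ℝ)
    (hW : ∀ t x : ℝ, W t x = z t (x - sigmaShift t) + (2 / 3) * |t| ^ (-(3 : ℝ) / 2)) :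
    ∀ t x : ℝ, t < 0 → 0 ≤ x →
      0 ≤ deriv (fun s => W s x) t + W t x * deriv (fun y => W t y) x
            - deriv (deriv (fun y => W t y)) x ∧
      z t 0 ≤ W t 0 ∧ z t 0 = 0 := by
  intro t x ht _
  have hz : IsCubicRoot z := hz
  set w := z t (x - sigmaShift t)
  have hc : HasDerivAt (fun s => 2 / 3 * |s| ^ (-(3 : ℝ) / 2)) (|t| ^ (-(5 : ℝ) / 2)) t := by
    refine ((hasDerivAt_abs_rpow_of_neg ht (-(3 : ℝ) / 2)).const_mul (2 / 3)).congr_deriv ?_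
    rw [show -(3 : ℝ) / 2 - 1 = -(5 : ℝ) / 2 by norm_num]
    ring
  have hWt : HasDerivAt (fun s => W s x) ((-(2 / 3 * |t| ^ (-(3 : ℝ) / 2)) - w) *
      (t - 3 * w ^ 2)⁻¹ + |t| ^ (-(5 : ℝ) / 2)) t := by
    simp only [hW]
    exact (hz.hasDerivAt_comp ht ((hasDerivAt_sigmaShift ht).const_sub x)).add hc
  have hWx : deriv (fun y => W t y) = fun y => deriv (z t) (y - sigmaShift t) := by
    funext y
    simp only [hW, deriv_add_const, deriv_comp_sub_const]
  have hWxx : HasDerivAt (deriv fun y => W t y) (6 * w * ((t - 3 * w ^ 2)⁻¹) ^ 3) x := by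
    rw [hWx]
    exact (hz.hasDerivAt_deriv_right ht _).comp_sub_const x _
  refine ⟨?_, ?_, hz.apply_zero ht⟩
  · rw [hWt.deriv, hWxx.deriv, hWx]
    beta_reduce
    rw [(hz.hasDerivAt_right ht (x - sigmaShift t)).deriv, hW]
    linarith [six_mul_mul_inv_pow_three_le ht w]
  · have hσ : 0 ≤ sigmaShift t := by unfold sigmaShift; positivity
    rw [hz.apply_zero ht, hW]
    exact add_nonneg (hz.nonneg_of_nonpos ht (by linarith)) (by positivity)
end
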